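/- arXiv:2010.10436 — 5 statements merged into one kernel-verified Lean document; each statement's English description precedes it below -/
import Mathlib

section
/- Let q and p be probability density functions on a measurable space. If the variance under q of log(q(z)/p(z)) is zero and q, p have the same support, then log(q/p) is q-a.e. constant, and since both densities integrate to 1, q = p almost everywhere. Conversely, if q = p a.e. then the variance is zero. Hence the log-variance loss L_q(q||p) = ½ Var_q(log(q/p)) vanishes if and only if q = p a.e. -/
/-!
If the `q`-variance of `f = log (q / p)` vanishes, then `f` equals its mean `m` wherever `q ≠ 0`,
so (the supports agreeing) `q = exp m * p` a.e.; integrating, `exp m = 1`, hence `q = p` a.e.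
Conversely, `log (q / p) = log 1 = 0` a.e. when `q = p` a.e., so both moments vanish.
-/

open MeasureTheory

section WeightedVariance

theorem mul_sub_sq_eq (w f c : ℝ) :
    w * (f - c) ^ 2 = (w * f ^ 2 - 2 * c * (w * f)) + c ^ 2 * w := by
  ring

variable {α : Type*} [MeasurableSpace α] {μ : Measure α} {w f : α → ℝ}

theorem MeasureTheory.Integrable.mul_sub_sq (hw : Integrable w μ)
    (hf1 : Integrable (fun z => w z * f z) μ) (hf2 : Integrable (fun z => w z * f z ^ 2) μ)
    (c : ℝ) :
    Integrable (fun z => w z * (f z - c) ^ 2) μ := by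
  simp only [mul_sub_sq_eq]
  exact (hf2.sub (hf1.const_mul _)).add (hw.const_mul _)

theorem integral_mul_sub_integral_sq (hw1 : ∫ z, w z ∂μ = 1)
    (hf1 : Integrable (fun z => w z * f z) μ) (hf2 : Integrable (fun z => w z * f z ^ 2) μ) :
    ∫ z, w z * (f z - ∫ y, w y * f y ∂μ) ^ 2 ∂μ
      = ∫ z, w z * f z ^ 2 ∂μ - (∫ z, w z * f z ∂μ) ^ 2 := by
  have hw := integrable_of_integral_eq_one hw1
  simp only [mul_sub_sq_eq]
  rw [integral_add, integral_sub hf2 (hf1.const_mul _), integral_const_mul,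
    integral_const_mul, hw1]
  · ring
  · exact hf2.sub (hf1.const_mul _)
  · exact hw.const_mul _

theorem ae_eq_of_integral_mul_sub_sq_eq_zero {c : ℝ} (hw : 0 ≤ᵐ[μ] w)
    (hint : Integrable (fun z => w z * (f z - c) ^ 2) μ)
    (hzero : ∫ z, w z * (f z - c) ^ 2 ∂μ = 0) :
    ∀ᵐ z ∂μ, w z ≠ 0 → f z = c := by
  have hnonneg : 0 ≤ᵐ[μ] fun z => w z * (f z - c) ^ 2 :=
    hw.mono fun z hz => mul_nonneg hz (sq_nonneg _)
  filter_upwards [(integral_eq_zero_iff_of_nonneg_ae hnonneg hint).mp hzero] with z hz hwz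
  simpa [hwz, sub_eq_zero] using hz

end WeightedVariance

section Densities

variable {α : Type*} [MeasurableSpace α] {μ : Measure α} {q p : α → ℝ}

theorem ae_eq_exp_mul_of_log_div_eq {c : ℝ}
    (hq0 : ∀ᵐ z ∂μ, 0 ≤ q z) (hp0 : ∀ᵐ z ∂μ, 0 ≤ p z)
    (hsupp : ∀ᵐ z ∂μ, (q z ≠ 0 ↔ p z ≠ 0))
    (hlog : ∀ᵐ z ∂μ, q z ≠ 0 → Real.log (q z / p z) = c) :
    q =ᵐ[μ] fun z => Real.exp c * p z := by
  filter_upwards [hq0, hp0, hsupp, hlog] with z hqz hpz hs hz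
  by_cases hq : q z = 0
  · have hp : p z = 0 := by simpa [hq] using hs
    rw [hq, hp, mul_zero]
  · have hpos : 0 < q z / p z :=
      div_pos (hqz.lt_of_ne' hq) (hpz.lt_of_ne' (hs.mp hq))
    rw [← hz hq, Real.exp_log hpos, div_mul_cancel₀ _ (hs.mp hq)]

theorem ae_eq_of_ae_eq_const_mul {a : ℝ} (h : q =ᵐ[μ] fun z => a * p z)
    (hq1 : ∫ z, q z ∂μ = 1) (hp1 : ∫ z, p z ∂μ = 1) : q =ᵐ[μ] p := by
  have ha : a = 1 := by
    rw [← hq1, integral_congr_ae h, integral_const_mul, hp1, mul_one]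
  simpa [ha] using h

theorem log_div_ae_eq_zero_of_ae_eq (h : q =ᵐ[μ] p) :
    (fun z => Real.log (q z / p z)) =ᵐ[μ] 0 := by
  filter_upwards [h] with z hz
  simp [hz]

end Densities

theorem log_variance_loss_eq_zero_iff_general {α : Type*} [MeasurableSpace α]
    (μ : Measure α) (q p : α → ℝ)
    (hq0 : ∀ᵐ z ∂μ, 0 ≤ q z) (hp0 : ∀ᵐ z ∂μ, 0 ≤ p z)
    (hq1 : ∫ z, q z ∂μ = 1) (hp1 : ∫ z, p z ∂μ = 1)
    (hsupp : ∀ᵐ z ∂μ, (q z ≠ 0 ↔ p z ≠ 0))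
    (hint1 : Integrable (fun z => q z * Real.log (q z / p z)) μ)
    (hint2 : Integrable (fun z => q z * (Real.log (q z / p z)) ^ 2) μ) :
    (1 / 2) * ((∫ z, q z * (Real.log (q z / p z)) ^ 2 ∂μ)
        - (∫ z, q z * Real.log (q z / p z) ∂μ) ^ 2) = 0 ↔ q =ᵐ[μ] p := by
  constructor
  · intro hloss
    have hvar := integral_mul_sub_integral_sq hq1 hint1 hint2
    have hint := (integrable_of_integral_eq_one hq1).mul_sub_sq hint1 hint2
      (∫ y, q y * Real.log (q y / p y) ∂μ)
    have hlog := ae_eq_of_integral_mul_sub_sq_eq_zero hq0 hint (by linarith)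
    exact ae_eq_of_ae_eq_const_mul (ae_eq_exp_mul_of_log_div_eq hq0 hp0 hsupp hlog) hq1 hp1
  · intro hqp
    have hlog := log_div_ae_eq_zero_of_ae_eq hqp
    have h1 : ∫ z, q z * Real.log (q z / p z) ∂μ = 0 :=
      integral_eq_zero_of_ae (hlog.mono fun z hz => by simp [hz])
    have h2 : ∫ z, q z * Real.log (q z / p z) ^ 2 ∂μ = 0 :=
      integral_eq_zero_of_ae (hlog.mono fun z hz => by simp [hz])
    rw [h1, h2]
    norm_num

/-- The log-variance loss `L_q(q‖p) = ½ Var_q(log(q/p))` vanishes iff `q = p` a.e.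
Here `q, p` are probability densities w.r.t. a σ-finite measure `μ`, with the same
support (a.e.), and the variance under `q` is written via density-weighted integrals. -/
theorem log_variance_loss_eq_zero_iff {α : Type*} [MeasurableSpace α]
    (μ : Measure α) [SigmaFinite μ] (q p : α → ℝ)
    (hqm : Measurable q) (hpm : Measurable p)
    (hq0 : ∀ᵐ z ∂μ, 0 ≤ q z) (hp0 : ∀ᵐ z ∂μ, 0 ≤ p z)
    (hq1 : ∫ z, q z ∂μ = 1) (hp1 : ∫ z, p z ∂μ = 1)
    (hsupp : ∀ᵐ z ∂μ, (q z ≠ 0 ↔ p z ≠ 0))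
    (hint1 : Integrable (fun z => q z * Real.log (q z / p z)) μ)
    (hint2 : Integrable (fun z => q z * (Real.log (q z / p z)) ^ 2) μ) :
    (1 / 2) * ((∫ z, q z * (Real.log (q z / p z)) ^ 2 ∂μ)
        - (∫ z, q z * Real.log (q z / p z) ∂μ) ^ 2) = 0 ↔ q =ᵐ[μ] p :=
  log_variance_loss_eq_zero_iff_general μ q p hq0 hp0 hq1 hp1 hsupp hint1 hint2
end

section
/- Let f_φ(z) = log(q_φ(z)/p(x,z)) and let ∂_{φ_i} log q_φ denote the i-th component of the score. Define the optimal control variate coefficient a*_i = Cov_{q_φ}(f_φ ∂_{φ_i} log q_φ, ∂_{φ_i} log q_φ) / Var_{q_φ}(∂_{φ_i} log q_φ). Then a*_i = E_{q_φ}[f_φ] + δ_i, where δ_i = Cov_{q_φ}(f_φ, (∂_{φ_i} log q_φ)²) / Var_{q_φ}(∂_{φ_i} log q_φ). -/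
open MeasureTheory

/-! Centring `B` makes `Var(B) = E[B²]` and `Cov(A·B, B) = E[A·B²]`, so the claim reduces to the
field identity `c / v = m + (c - m v) / v` for `v ≠ 0`. -/

theorem div_eq_add_sub_mul_div {K : Type*} [DivisionRing K] (m c : K) {v : K} (hv : v ≠ 0) :
    c / v = m + (c - m * v) / v := by
  rw [sub_div, mul_div_cancel_right₀ m hv, add_sub_cancel]

theorem integral_mul_mul_self_eq_integral_mul_sq {Ω : Type*} [MeasurableSpace Ω]
    (μ : Measure Ω) (A B : Ω → ℝ) :
    ∫ ω, (A ω * B ω) * B ω ∂μ = ∫ ω, A ω * (B ω) ^ 2 ∂μ := by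
  simp only [mul_assoc, sq]

theorem optimal_cv_decomposition_general {Ω : Type*} [MeasurableSpace Ω]
    (μ : Measure Ω) (A B : Ω → ℝ)
    (hB0 : ∫ ω, B ω ∂μ = 0)
    (hVarpos : 0 < (∫ ω, (B ω) ^ 2 ∂μ) - (∫ ω, B ω ∂μ) ^ 2) :
    ((∫ ω, (A ω * B ω) * B ω ∂μ) - (∫ ω, A ω * B ω ∂μ) * (∫ ω, B ω ∂μ))
        / ((∫ ω, (B ω) ^ 2 ∂μ) - (∫ ω, B ω ∂μ) ^ 2)
      = (∫ ω, A ω ∂μ)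
        + ((∫ ω, A ω * (B ω) ^ 2 ∂μ) - (∫ ω, A ω ∂μ) * (∫ ω, (B ω) ^ 2 ∂μ))
          / ((∫ ω, (B ω) ^ 2 ∂μ) - (∫ ω, B ω ∂μ) ^ 2) := by
  rw [hB0, zero_pow two_ne_zero, sub_zero] at hVarpos
  rw [hB0, integral_mul_mul_self_eq_integral_mul_sq, mul_zero, sub_zero, zero_pow two_ne_zero,
    sub_zero]
  exact div_eq_add_sub_mul_div _ _ hVarpos.ne'

/-- Decomposition of the optimal control variate coefficient: with `A = f_φ` and
`B = ∂_{φ_i} log q_φ` (under the distribution `μ` of `z ∼ q_φ`), if `E[B] = 0` and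
`Var(B) > 0`, then
`a* = Cov(A·B, B)/Var(B) = E[A] + δ` where `δ = Cov(A, B²)/Var(B)`. -/
theorem optimal_cv_decomposition {Ω : Type*} [MeasurableSpace Ω]
    (μ : Measure Ω) [IsProbabilityMeasure μ] (A B : Ω → ℝ)
    (hA : Integrable A μ) (hB : Integrable B μ)
    (hAB : Integrable (fun ω => A ω * B ω) μ)
    (hB2 : Integrable (fun ω => (B ω) ^ 2) μ)
    (hAB2 : Integrable (fun ω => A ω * (B ω) ^ 2) μ)
    (hABB : Integrable (fun ω => (A ω * B ω) * B ω) μ)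
    (hB0 : ∫ ω, B ω ∂μ = 0)
    (hVarpos : 0 < (∫ ω, (B ω) ^ 2 ∂μ) - (∫ ω, B ω ∂μ) ^ 2) :
    ((∫ ω, (A ω * B ω) * B ω ∂μ) - (∫ ω, A ω * B ω ∂μ) * (∫ ω, B ω ∂μ))
        / ((∫ ω, (B ω) ^ 2 ∂μ) - (∫ ω, B ω ∂μ) ^ 2)
      = (∫ ω, A ω ∂μ)
        + ((∫ ω, A ω * (B ω) ^ 2 ∂μ) - (∫ ω, A ω ∂μ) * (∫ ω, (B ω) ^ 2 ∂μ))
          / ((∫ ω, (B ω) ^ 2 ∂μ) - (∫ ω, B ω ∂μ) ^ 2) :=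
  optimal_cv_decomposition_general μ A B hB0 hVarpos
end

section
/- Let q and p be probability densities with sup_z q(z)/p(z) < C for some constant C > 0. Then E_q[log²(p/q)] ≤ 2 E_q[exp(|log(p/q)|) − 1 − |log(p/q)|] ≤ 4C · h²(q,p), where h(q,p) is the Hellinger distance; combined with h²(q,p) ≤ KL(q||p), it follows that E_q[log²(p/q)] ≤ 4C · KL(q||p). -/
open MeasureTheory

lemma exp_quad (y : ℝ) (hy : 0 ≤ y) : y ^ 2 ≤ 2 * (Real.exp y - 1 - y) := by
  have mono : MonotoneOn (fun y : ℝ => 2 * (Real.exp y - 1 - y) - y ^ 2) (Set.Ici 0) := by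
    apply monotoneOn_of_deriv_nonneg (convex_Ici 0)
    · fun_prop
    · intro x hx
      exact (((((Real.hasDerivAt_exp x).sub_const 1).sub (hasDerivAt_id x)).const_mul 2).sub
        (hasDerivAt_pow 2 x)).differentiableAt.differentiableWithinAt
    · intro x hx
      rw [interior_Ici] at hx
      have hd : HasDerivAt (fun y : ℝ => 2 * (Real.exp y - 1 - y) - y ^ 2)
          (2 * (Real.exp x - 0 - 1) - 2 * x) x := by
        have := ((((Real.hasDerivAt_exp x).sub_const 1).sub (hasDerivAt_id x)).const_mul 2).sub
          (hasDerivAt_pow 2 x)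
        exact this.congr_deriv (by simp)
      rw [hd.deriv]
      have := Real.add_one_le_exp x
      linarith
  have h := mono (Set.self_mem_Ici) hy hy
  simp at h
  linarith

lemma log_quad (a b : ℝ) (ha : 0 < a) (hab : a ≤ b) :
    0 ≤ b ^ 2 - 4 * a * b + 3 * a ^ 2 + 2 * a ^ 2 * (Real.log b - Real.log a) := by
  have hb : 0 < b := lt_of_lt_of_le ha hab
  have hd : ∀ x : ℝ, 0 < x → HasDerivAt
      (fun x => x ^ 2 - 4 * a * x + 3 * a ^ 2 + 2 * a ^ 2 * (Real.log x - Real.log a))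
      (2 * x - 4 * a + 2 * a ^ 2 * x⁻¹) x := by
    intro x hx
    have h1 : HasDerivAt (fun x : ℝ => x ^ 2) (2 * x) x := by simpa using hasDerivAt_pow 2 x
    have h2 : HasDerivAt (fun x : ℝ => 4 * a * x) (4 * a) x := by
      simpa using (hasDerivAt_id x).const_mul (4 * a)
    have h3 : HasDerivAt (fun x : ℝ => 2 * a ^ 2 * (Real.log x - Real.log a))
        (2 * a ^ 2 * x⁻¹) x := ((Real.hasDerivAt_log hx.ne').sub_const _).const_mul _
    exact (((h1.sub h2).add_const (3 * a ^ 2)).add h3)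
  have mono : MonotoneOn
      (fun x => x ^ 2 - 4 * a * x + 3 * a ^ 2 + 2 * a ^ 2 * (Real.log x - Real.log a))
      (Set.Ici a) := by
    apply monotoneOn_of_deriv_nonneg (convex_Ici a)
    · apply ContinuousOn.add
      · fun_prop
      · apply ContinuousOn.mul continuousOn_const
        apply ContinuousOn.sub _ continuousOn_const
        exact Real.continuousOn_log.mono (fun x hx => ne_of_gt (lt_of_lt_of_le ha hx))
    · intro x hx
      rw [interior_Ici] at hx
      exact (hd x (ha.trans hx)).differentiableAt.differentiableWithinAt
    · intro x hx
      rw [interior_Ici] at hx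
      have hx0 : 0 < x := ha.trans hx
      rw [(hd x hx0).deriv]
      have : 2 * x - 4 * a + 2 * a ^ 2 * x⁻¹ = 2 * (x - a) ^ 2 / x := by
        field_simp; ring
      rw [this]; positivity
  have h := mono (Set.self_mem_Ici) hab hab
  simp only [sub_self, mul_zero, add_zero] at h
  nlinarith [h]

lemma ptwise1 (q p : ℝ) (hq : 0 ≤ q) :
    q * (Real.log (p / q)) ^ 2
      ≤ 2 * (q * (Real.exp |Real.log (p / q)| - 1 - |Real.log (p / q)|)) := by
  have h := exp_quad |Real.log (p / q)| (abs_nonneg _)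
  rw [sq_abs] at h
  nlinarith [mul_le_mul_of_nonneg_left h hq]

lemma ptwise2 (C q p : ℝ) (hC : 1 ≤ C) (hq : 0 < q) (hp : 0 < p) (h : q < C * p) :
    q * (Real.exp |Real.log (p / q)| - 1 - |Real.log (p / q)|)
      ≤ 2 * C * (Real.sqrt q - Real.sqrt p) ^ 2 := by
  set a := Real.sqrt q with hadef
  set b := Real.sqrt p with hbdef
  have ha : 0 < a := Real.sqrt_pos.mpr hq
  have hb : 0 < b := Real.sqrt_pos.mpr hp
  have ha2 : a ^ 2 = q := Real.sq_sqrt hq.le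
  have hb2 : b ^ 2 = p := Real.sq_sqrt hp.le
  have hla : Real.log a = Real.log q / 2 := Real.log_sqrt hq.le
  have hlb : Real.log b = Real.log p / 2 := Real.log_sqrt hp.le
  rcases le_or_gt q p with hpq | hpq
  · -- q ≤ p
    have hL0 : 0 ≤ Real.log (p / q) := Real.log_nonneg ((one_le_div hq).mpr hpq)
    rw [abs_of_nonneg hL0, Real.exp_log (div_pos hp hq), Real.log_div hp.ne' hq.ne']
    have hab : a ≤ b := Real.sqrt_le_sqrt hpq
    have key := log_quad a b ha hab
    rw [hla, hlb, ha2, hb2] at key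
    have e1 : q * (p / q - 1 - (Real.log p - Real.log q))
        = p - q - q * (Real.log p - Real.log q) := by field_simp
    rw [e1]
    nlinarith [key, ha2, hb2, mul_nonneg (sub_nonneg.mpr hC) (sq_nonneg (a - b))]
  · -- p < q
    have hL0 : Real.log (p / q) < 0 := Real.log_neg (div_pos hp hq) ((div_lt_one hq).mpr hpq)
    have habs : |Real.log (p / q)| = Real.log q - Real.log p := by
      rw [abs_of_neg hL0, Real.log_div hp.ne' hq.ne']; ring
    rw [habs]
    have hexp : Real.exp (Real.log q - Real.log p) = q / p := by
      rw [← Real.log_div hq.ne' hp.ne', Real.exp_log (div_pos hq hp)]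
    rw [hexp]
    have hba : b ≤ a := Real.sqrt_le_sqrt hpq.le
    have key := log_quad b a hb hba
    rw [hla, hlb, ha2, hb2] at key
    have hX : 0 ≤ q - p - p * (Real.log q - Real.log p) := by
      have h1 := Real.log_le_sub_one_of_pos (div_pos hq hp)
      rw [Real.log_div hq.ne' hp.ne'] at h1
      have e3 : p * (q / p - 1) = q - p := by field_simp
      have h4 := mul_le_mul_of_nonneg_left h1 hp.le
      rw [e3] at h4
      linarith
    have hA : q - p - p * (Real.log q - Real.log p) ≤ 2 * (a - b) ^ 2 := by
      nlinarith [key, ha2, hb2]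
    have hqC : q ≤ C * p := h.le
    have e1 : q * (q / p - 1 - (Real.log q - Real.log p))
        = q * (q - p - p * (Real.log q - Real.log p)) / p := by field_simp
    rw [e1, div_le_iff₀ hp]
    have hC0 : (0:ℝ) ≤ C := by linarith
    nlinarith [mul_nonneg (sub_nonneg.mpr hqC) hX,
      mul_nonneg (mul_nonneg hC0 hp.le) (sub_nonneg.mpr hA)]

lemma ptwise3 (q p : ℝ) (hq : 0 < q) (hp : 0 < p) :
    (Real.sqrt q - Real.sqrt p) ^ 2 ≤ q * Real.log (q / p) + (p - q) := by
  set a := Real.sqrt q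
  set b := Real.sqrt p
  have ha : 0 < a := Real.sqrt_pos.mpr hq
  have hb : 0 < b := Real.sqrt_pos.mpr hp
  have ha2 : a ^ 2 = q := Real.sq_sqrt hq.le
  have hb2 : b ^ 2 = p := Real.sq_sqrt hp.le
  have h := Real.log_le_sub_one_of_pos (div_pos hb ha)
  rw [Real.log_div hb.ne' ha.ne', Real.log_sqrt hp.le, Real.log_sqrt hq.le] at h
  rw [Real.log_div hq.ne' hp.ne']
  have h2 : a ^ 2 * (Real.log p / 2 - Real.log q / 2) ≤ a * b - a ^ 2 := by
    have e2 : a ^ 2 * (b / a - 1) = a * b - a ^ 2 := by field_simp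
    have h3 := mul_le_mul_of_nonneg_left h (sq_nonneg a)
    rw [e2] at h3
    exact h3
  rw [ha2] at h2
  nlinarith [h2, ha2, hb2]

/-- Second-moment / Hellinger / KL bound: if `q, p` are probability densities with
`q ≤ C·p` pointwise (i.e. `sup q/p < C`), then
`E_q[log²(p/q)] ≤ 2 E_q[exp|log(p/q)| − 1 − |log(p/q)|] ≤ 4C·h²(q,p) ≤ 4C·KL(q‖p)`,
where `h²(q,p) = ∫ (√q − √p)²` and `KL(q‖p) = ∫ q log(q/p)`. -/
theorem log_sq_le_hellinger_le_KL {α : Type*} [MeasurableSpace α]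
    (μ : Measure α) (q p : α → ℝ) (C : ℝ) (hC : 0 < C)
    (hqm : Measurable q) (hpm : Measurable p)
    (hq0 : ∀ z, 0 < q z) (hp0 : ∀ z, 0 < p z)
    (hq1 : ∫ z, q z ∂μ = 1) (hp1 : ∫ z, p z ∂μ = 1)
    (hsup : ∀ z, q z < C * p z)
    (hint1 : Integrable (fun z => q z * (Real.log (p z / q z)) ^ 2) μ)
    (hint2 : Integrable (fun z =>
      q z * (Real.exp |Real.log (p z / q z)| - 1 - |Real.log (p z / q z)|)) μ)
    (hint3 : Integrable (fun z => (Real.sqrt (q z) - Real.sqrt (p z)) ^ 2) μ)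
    (hint4 : Integrable (fun z => q z * Real.log (q z / p z)) μ) :
    (∫ z, q z * (Real.log (p z / q z)) ^ 2 ∂μ)
        ≤ 2 * ∫ z, q z * (Real.exp |Real.log (p z / q z)| - 1 - |Real.log (p z / q z)|) ∂μ ∧
    2 * (∫ z, q z * (Real.exp |Real.log (p z / q z)| - 1 - |Real.log (p z / q z)|) ∂μ)
        ≤ 4 * C * ∫ z, (Real.sqrt (q z) - Real.sqrt (p z)) ^ 2 ∂μ ∧
    (∫ z, q z * (Real.log (p z / q z)) ^ 2 ∂μ)
        ≤ 4 * C * ∫ z, q z * Real.log (q z / p z) ∂μ := by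
  have hqi : Integrable q μ := integrable_of_integral_eq_one hq1
  have hpi : Integrable p μ := integrable_of_integral_eq_one hp1
  have hC1 : 1 ≤ C := by
    have h := integral_mono hqi (hpi.const_mul C) (fun z => (hsup z).le)
    rw [integral_const_mul, hp1, mul_one, hq1] at h
    exact h
  have I1 : (∫ z, q z * (Real.log (p z / q z)) ^ 2 ∂μ)
      ≤ 2 * ∫ z, q z * (Real.exp |Real.log (p z / q z)| - 1 - |Real.log (p z / q z)|) ∂μ := by
    have h := integral_mono hint1 (hint2.const_mul 2)
      (fun z => ptwise1 (q z) (p z) (hq0 z).le)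
    rwa [integral_const_mul] at h
  have I2 : (∫ z, q z * (Real.exp |Real.log (p z / q z)| - 1 - |Real.log (p z / q z)|) ∂μ)
      ≤ 2 * C * ∫ z, (Real.sqrt (q z) - Real.sqrt (p z)) ^ 2 ∂μ := by
    have h := integral_mono hint2 (hint3.const_mul (2 * C))
      (fun z => ptwise2 C (q z) (p z) hC1 (hq0 z) (hp0 z) (hsup z))
    rwa [integral_const_mul] at h
  have I3 : (∫ z, (Real.sqrt (q z) - Real.sqrt (p z)) ^ 2 ∂μ)
      ≤ ∫ z, q z * Real.log (q z / p z) ∂μ := by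
    have hsub : Integrable (fun z => p z - q z) μ := hpi.sub hqi
    have hInt : Integrable (fun z => q z * Real.log (q z / p z) + (p z - q z)) μ :=
      hint4.add hsub
    have h := integral_mono hint3 hInt (fun z => ptwise3 (q z) (p z) (hq0 z) (hp0 z))
    rw [integral_add hint4 hsub, integral_sub hpi hqi, hq1, hp1] at h
    simpa using h
  refine ⟨I1, by linarith, ?_⟩
  have h4 : 4 * C * (∫ z, (Real.sqrt (q z) - Real.sqrt (p z)) ^ 2 ∂μ)
      ≤ 4 * C * ∫ z, q z * Real.log (q z / p z) ∂μ :=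
    mul_le_mul_of_nonneg_left I3 (by linarith)
  linarith
end

section
/- Assume sup_z q_φ(z)/p(z|x) < C, the kurtosis Kurt[∂_{φ_i} log q_φ] = E_{q_φ}[(∂_{φ_i} log q_φ)^4] / (E_{q_φ}[(∂_{φ_i} log q_φ)²])² is finite, and E_{q_φ}[log(q_φ/p(x,·))] = KL(q_φ || p(·|x)) − log p(x) ≠ 0. Then |δ_i / E_{q_φ}[f_φ]| ≤ 2√(C · Kurt[∂_{φ_i} log q_φ]) / |√KL − (log p(x))/√KL|, where δ_i = Cov_{q_φ}(f_φ, (∂_{φ_i} log q_φ)²) / Var_{q_φ}(∂_{φ_i} log q_φ), f_φ = log(q_φ/p(x,·)), and KL = KL(q_φ(z) || p(z|x)). -/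
/-!
Write `L = log (q / p(·|x))`. Since `f_φ = L - log p(x)` differs from `L` by a constant,
`δ_i = Cov_q(L, B²) / E_q[B²]`, and Cauchy–Schwarz bounds the covariance by
`√(Var_q L · E_q[B⁴])`. The sup bound gives `Var_q L ≤ E_q[L²] ≤ 4C·KL`: pointwise
`t log² t ≤ 4C (t log t - t + 1)` for `0 < t = q/p ≤ C`, and the right side integrates against
`p` to `4C·KL`. Finally `E_q f_φ = KL - log p(x) = √KL · (√KL - log p(x) / √KL)`.
-/

open Real InformationTheory MeasureTheory

lemma sq_add_two_le_four_mul_exp {s : ℝ} (hs : 0 ≤ s) : (s + 2) ^ 2 ≤ 4 * exp s := by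
  have h := add_one_le_exp (s / 2)
  have hsq : exp (s / 2) ^ 2 = exp s := by rw [← exp_nat_mul]; ring_nf
  nlinarith

lemma sq_le_four_mul_klFun_exp {s : ℝ} (hs : 0 ≤ s) : s ^ 2 ≤ 4 * klFun (exp s) := by
  rw [klFun_apply, log_exp]
  rcases le_total s 1 with h1 | h1
  · -- `exp s ≤ 1 + s + 3 s² / 4` on `[0, 1]`
    have h := exp_bound' hs h1 (n := 2) two_pos
    norm_num [Finset.sum_range_succ] at h
    nlinarith [mul_nonneg (sq_nonneg s) hs]
  · nlinarith [quadratic_le_exp_of_nonneg hs, mul_nonneg (sq_nonneg s) (sub_nonneg.2 h1)]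

lemma mul_log_sq_le_four_mul_klFun_of_le_one {t : ℝ} (ht : 0 < t) (ht1 : t ≤ 1) :
    t * log t ^ 2 ≤ 4 * klFun t := by
  obtain ⟨s, hs, rfl⟩ : ∃ s, 0 ≤ s ∧ t = exp (-s) :=
    ⟨-log t, neg_nonneg.2 (log_nonpos ht.le ht1), by rw [neg_neg, exp_log ht]⟩
  have hinv : exp (-s) * exp s = 1 := by rw [← exp_add]; simp
  rw [klFun_apply, log_exp]
  nlinarith [mul_le_mul_of_nonneg_left (sq_add_two_le_four_mul_exp hs) (exp_pos (-s)).le]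

lemma log_sq_le_four_mul_klFun_of_one_le {t : ℝ} (ht1 : 1 ≤ t) : log t ^ 2 ≤ 4 * klFun t := by
  simpa [exp_log (zero_lt_one.trans_le ht1)] using sq_le_four_mul_klFun_exp (log_nonneg ht1)

lemma mul_log_sq_le_four_mul_klFun {t c : ℝ} (ht : 0 < t) (htc : t ≤ c) (hc : 1 ≤ c) :
    t * log t ^ 2 ≤ 4 * c * klFun t := by
  have hkl := klFun_nonneg ht.le
  rcases le_total t 1 with ht1 | ht1
  · nlinarith [mul_log_sq_le_four_mul_klFun_of_le_one ht ht1]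
  · nlinarith [log_sq_le_four_mul_klFun_of_one_le ht1, sq_nonneg (log t)]

lemma mul_log_div_sq_le {a b c : ℝ} (ha : 0 < a) (hb : 0 < b) (hab : a ≤ c * b) (hc : 1 ≤ c) :
    a * log (a / b) ^ 2 ≤ 4 * c * (a * log (a / b) + b - a) := by
  have key := mul_log_sq_le_four_mul_klFun (div_pos ha hb) ((div_le_iff₀ hb).2 hab) hc
  have hba : b * (a / b) = a := mul_div_cancel₀ a hb.ne'
  rw [klFun_apply] at key
  calc a * log (a / b) ^ 2 = b * (a / b * log (a / b) ^ 2) := by rw [← mul_assoc, hba]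
    _ ≤ b * (4 * c * (a / b * log (a / b) + 1 - a / b)) := mul_le_mul_of_nonneg_left key hb.le
    _ = 4 * c * (a * log (a / b) + b - a) := by
        linear_combination (4 * c * log (a / b) - 4 * c) * hba

section Densities

variable {α : Type*} [MeasurableSpace α] {μ : Measure α} {q p : α → ℝ}

lemma one_le_of_le_const_mul {c : ℝ} (hq1 : ∫ z, q z ∂μ = 1) (hp1 : ∫ z, p z ∂μ = 1)
    (hqp : ∀ z, q z ≤ c * p z) : 1 ≤ c := by
  have hq := Integrable.of_integral_ne_zero (hq1 ▸ one_ne_zero)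
  have hp := Integrable.of_integral_ne_zero (hp1 ▸ one_ne_zero)
  simpa [hq1, integral_const_mul, hp1] using integral_mono hq (hp.const_mul c) hqp

lemma integral_mul_log_div_sq_le {c : ℝ} (hq0 : ∀ z, 0 < q z) (hp0 : ∀ z, 0 < p z)
    (hq1 : ∫ z, q z ∂μ = 1) (hp1 : ∫ z, p z ∂μ = 1) (hqp : ∀ z, q z ≤ c * p z)
    (hint : Integrable (fun z => q z * log (q z / p z)) μ) :
    ∫ z, q z * log (q z / p z) ^ 2 ∂μ ≤ 4 * c * ∫ z, q z * log (q z / p z) ∂μ := by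
  have hc := one_le_of_le_const_mul hq1 hp1 hqp
  have hq := Integrable.of_integral_ne_zero (hq1 ▸ one_ne_zero)
  have hp := Integrable.of_integral_ne_zero (hp1 ▸ one_ne_zero)
  calc ∫ z, q z * log (q z / p z) ^ 2 ∂μ
      ≤ ∫ z, 4 * c * (q z * log (q z / p z) + p z - q z) ∂μ :=
        integral_mono_of_nonneg (.of_forall fun z => mul_nonneg (hq0 z).le (sq_nonneg _))
          (((hint.add hp).sub hq).const_mul _)
          (.of_forall fun z => mul_log_div_sq_le (hq0 z) (hp0 z) (hqp z) hc)
    _ = 4 * c * ∫ z, q z * log (q z / p z) ∂μ := by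
        rw [integral_const_mul, integral_sub ?_ hq, integral_add hint hp, hq1, hp1]
        · ring
        · exact hint.add hp

lemma integrable_mul_sub_sq {g : α → ℝ} (m : ℝ) (hq : Integrable q μ)
    (hg : Integrable (fun z => q z * g z) μ) (hg2 : Integrable (fun z => q z * g z ^ 2) μ) :
    Integrable (fun z => q z * (g z - m) ^ 2) μ := by
  have h := (hg2.sub (hg.const_mul (2 * m))).add (hq.const_mul (m ^ 2))
  exact h.congr (.of_forall fun z => by simp only [Pi.add_apply, Pi.sub_apply]; ring)

lemma integral_mul_sub_integral_sq_s9 {g : α → ℝ} (hq1 : ∫ z, q z ∂μ = 1)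
    (hg : Integrable (fun z => q z * g z) μ) (hg2 : Integrable (fun z => q z * g z ^ 2) μ) :
    ∫ z, q z * (g z - ∫ y, q y * g y ∂μ) ^ 2 ∂μ
      = ∫ z, q z * g z ^ 2 ∂μ - (∫ z, q z * g z ∂μ) ^ 2 := by
  set m := ∫ y, q y * g y ∂μ
  have hq := Integrable.of_integral_ne_zero (hq1 ▸ one_ne_zero)
  have hexp : (fun z => q z * (g z - m) ^ 2)
      = fun z => q z * g z ^ 2 - 2 * m * (q z * g z) + m ^ 2 * q z := by
    funext z; ring
  rw [hexp, integral_add ?_ (hq.const_mul _), integral_sub hg2 (hg.const_mul _),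
    integral_const_mul, integral_const_mul, hq1]
  · ring
  · exact hg2.sub (hg.const_mul _)

lemma integral_mul_log_div_sub_sq_le {c : ℝ} (hq0 : ∀ z, 0 < q z) (hp0 : ∀ z, 0 < p z)
    (hq1 : ∫ z, q z ∂μ = 1) (hp1 : ∫ z, p z ∂μ = 1) (hqp : ∀ z, q z ≤ c * p z)
    (hint : Integrable (fun z => q z * log (q z / p z)) μ)
    (hint2 : Integrable (fun z => q z * log (q z / p z) ^ 2) μ) :
    ∫ z, q z * (log (q z / p z) - ∫ y, q y * log (q y / p y) ∂μ) ^ 2 ∂μ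
      ≤ 4 * c * ∫ z, q z * log (q z / p z) ∂μ := by
  rw [integral_mul_sub_integral_sq_s9 hq1 hint hint2]
  linarith [integral_mul_log_div_sq_le hq0 hp0 hq1 hp1 hqp hint,
    sq_nonneg (∫ z, q z * log (q z / p z) ∂μ)]

lemma integral_mul_sub_mul {f h : α → ℝ} (m : ℝ)
    (hfh : Integrable (fun z => q z * (f z * h z)) μ) (hh : Integrable (fun z => q z * h z) μ) :
    ∫ z, q z * ((f z - m) * h z) ∂μ = ∫ z, q z * (f z * h z) ∂μ - m * ∫ z, q z * h z ∂μ := by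
  rw [← integral_const_mul, ← integral_sub hfh (hh.const_mul m)]
  congr 1; funext z; ring

lemma sq_integral_mul_mul_le {w g h : α → ℝ} (hw : ∀ z, 0 ≤ w z)
    (hg : Integrable (fun z => w z * g z ^ 2) μ) (hh : Integrable (fun z => w z * h z ^ 2) μ)
    (hgh : Integrable (fun z => w z * (g z * h z)) μ) :
    (∫ z, w z * (g z * h z) ∂μ) ^ 2 ≤ (∫ z, w z * g z ^ 2 ∂μ) * ∫ z, w z * h z ^ 2 ∂μ := by
  have hquad : ∀ x : ℝ, 0 ≤ (∫ z, w z * h z ^ 2 ∂μ) * (x * x)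
      + (2 * ∫ z, w z * (g z * h z) ∂μ) * x + ∫ z, w z * g z ^ 2 ∂μ := by
    intro x
    have hexp : (fun z => w z * (g z + x * h z) ^ 2) = fun z =>
        x * x * (w z * h z ^ 2) + 2 * x * (w z * (g z * h z)) + w z * g z ^ 2 := by
      funext z; ring
    have hint : Integrable (fun z => x * x * (w z * h z ^ 2) + 2 * x * (w z * (g z * h z))) μ :=
      (hh.const_mul _).add (hgh.const_mul _)
    calc 0 ≤ ∫ z, w z * (g z + x * h z) ^ 2 ∂μ :=
          integral_nonneg fun z => mul_nonneg (hw z) (sq_nonneg _)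
      _ = _ := by
          rw [hexp, integral_add hint hg, integral_add (hh.const_mul _) (hgh.const_mul _),
            integral_const_mul, integral_const_mul]
          ring
  have := discrim_le_zero hquad
  rw [discrim] at this
  nlinarith

end Densities

lemma abs_div_le_sqrt_mul_div_sq {N K M d : ℝ} (hN : N ^ 2 ≤ K * M) :
    |N / d| ≤ √(K * (M / d ^ 2)) := by
  rw [← sqrt_sq_eq_abs, div_pow, ← mul_div_assoc]
  exact sqrt_le_sqrt (div_le_div_of_nonneg_right hN (sq_nonneg d))

lemma abs_div_sub_le_of_abs_le {δ K a b : ℝ} (hK : 0 < K) (hδ : |δ| ≤ √(b * K)) :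
    |δ / (K - a)| ≤ √b / |√K - a / √K| := by
  have hsK : 0 < √K := sqrt_pos.2 hK
  have hfac : K - a = √K * (√K - a / √K) := by
    rw [mul_sub, mul_self_sqrt hK.le, mul_div_cancel₀ _ hsK.ne']
  rw [sqrt_mul' _ hK.le] at hδ
  rw [hfac, abs_div, abs_mul, abs_of_pos hsK]
  calc |δ| / (√K * |√K - a / √K|) ≤ √b * √K / (√K * |√K - a / √K|) :=
        div_le_div_of_nonneg_right hδ (by positivity)
    _ = √b / |√K - a / √K| := by rw [mul_comm (√b), mul_div_mul_left _ _ hsK.ne']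

theorem delta_cv_relative_bound_general {α : Type*} [MeasurableSpace α]
    (μ : Measure α) (q ppost B : α → ℝ) (px C KL kurt δ Ef : ℝ)
    (hq0 : ∀ z, 0 < q z) (hp0 : ∀ z, 0 < ppost z) (hpx : 0 < px)
    (hq1 : ∫ z, q z ∂μ = 1) (hp1 : ∫ z, ppost z ∂μ = 1)
    (hsup : ∀ z, q z < C * ppost z)
    (hKL : KL = ∫ z, q z * Real.log (q z / ppost z) ∂μ) (hKLpos : 0 < KL)
    (hkurt : kurt = (∫ z, q z * (B z) ^ 4 ∂μ) / (∫ z, q z * (B z) ^ 2 ∂μ) ^ 2)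
    (hEf : Ef = ∫ z, q z * Real.log (q z / (px * ppost z)) ∂μ)
    (hEfKL : Ef = KL - Real.log px)
    (hδ : δ = ((∫ z, q z * (Real.log (q z / (px * ppost z)) * (B z) ^ 2) ∂μ)
        - (∫ z, q z * Real.log (q z / (px * ppost z)) ∂μ) * (∫ z, q z * (B z) ^ 2 ∂μ))
      / ∫ z, q z * (B z) ^ 2 ∂μ)
    (hint1 : Integrable (fun z => q z * Real.log (q z / ppost z)) μ)
    (hint2 : Integrable (fun z => q z * (Real.log (q z / ppost z)) ^ 2) μ)
    (hint3 : Integrable (fun z => q z * (B z) ^ 2) μ)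
    (hint4 : Integrable (fun z => q z * (B z) ^ 4) μ)
    (hint5 : Integrable (fun z => q z * (Real.log (q z / (px * ppost z)) * (B z) ^ 2)) μ) :
    |δ / Ef| ≤ 2 * Real.sqrt (C * kurt)
      / |Real.sqrt KL - Real.log px / Real.sqrt KL| := by
  have hq : Integrable q μ := .of_integral_ne_zero (by simp [hq1])
  have hlog : ∀ z, log (q z / (px * ppost z)) - Ef = log (q z / ppost z) - KL := fun z => by
    rw [hEfKL, div_mul_eq_div_div_swap, log_div (div_pos (hq0 z) (hp0 z)).ne' hpx.ne']
    ring
  have hcov : ∫ z, q z * (log (q z / (px * ppost z)) * B z ^ 2) ∂μ - Ef * ∫ z, q z * B z ^ 2 ∂μ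
      = ∫ z, q z * ((log (q z / ppost z) - KL) * B z ^ 2) ∂μ := by
    rw [← integral_mul_sub_mul Ef hint5 hint3]
    simp_rw [hlog]
  have hcov_int : Integrable (fun z => q z * ((log (q z / ppost z) - KL) * B z ^ 2)) μ :=
    (hint5.sub (hint3.const_mul Ef)).congr (.of_forall fun z => by
      simp only [Pi.sub_apply, ← hlog z]; ring)
  have hvar := integral_mul_log_div_sub_sq_le hq0 hp0 hq1 hp1 (fun z => (hsup z).le) hint1 hint2
  rw [← hKL] at hvar
  have hcs := sq_integral_mul_mul_le (fun z => (hq0 z).le)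
    (integrable_mul_sub_sq KL hq hint1 hint2) (by simpa only [← pow_mul] using hint4) hcov_int
  simp only [← pow_mul] at hcs
  have hδ_le : |δ| ≤ √(4 * (C * kurt) * KL) := by
    have hfourth : 0 ≤ ∫ z, q z * B z ^ 4 ∂μ :=
      integral_nonneg fun z => mul_nonneg (hq0 z).le (by positivity)
    rw [hδ, ← hEf, hcov, show 4 * (C * kurt) * KL = 4 * C * KL * ((∫ z, q z * B z ^ 4 ∂μ)
      / (∫ z, q z * B z ^ 2 ∂μ) ^ 2) by rw [hkurt]; ring]
    exact abs_div_le_sqrt_mul_div_sq (hcs.trans (mul_le_mul_of_nonneg_right hvar hfourth))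
  rw [hEfKL, show 2 * √(C * kurt) = √(4 * (C * kurt)) by
    rw [sqrt_mul zero_le_four, show (4 : ℝ) = 2 ^ 2 by norm_num, sqrt_sq zero_le_two]]
  exact abs_div_sub_le_of_abs_le hKLpos hδ_le

/-- Proposition 2 of the paper: if `sup_z q_φ(z)/p(z|x) < C`, the kurtosis of the score
component `B = ∂_{φ_i} log q_φ` is finite, and `E_{q_φ}[f_φ] = KL − log p(x) ≠ 0`
(with `f_φ = log(q_φ/p(x,·))`, `p(x,z) = p(x)·p(z|x)`), then the relative control
variate correction satisfies
`|δ_i / E[f_φ]| ≤ 2 √(C·Kurt) / |√KL − log p(x)/√KL|`. -/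
theorem delta_cv_relative_bound {α : Type*} [MeasurableSpace α]
    (μ : Measure α) (q ppost B : α → ℝ) (px C KL kurt δ Ef : ℝ)
    (hqm : Measurable q) (hpm : Measurable ppost)
    (hq0 : ∀ z, 0 < q z) (hp0 : ∀ z, 0 < ppost z) (hpx : 0 < px)
    (hq1 : ∫ z, q z ∂μ = 1) (hp1 : ∫ z, ppost z ∂μ = 1)
    (hC : 0 < C) (hsup : ∀ z, q z < C * ppost z)
    (hKL : KL = ∫ z, q z * Real.log (q z / ppost z) ∂μ) (hKLpos : 0 < KL)
    (hB0 : ∫ z, q z * B z ∂μ = 0)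
    (hB2pos : 0 < ∫ z, q z * (B z) ^ 2 ∂μ)
    (hkurt : kurt = (∫ z, q z * (B z) ^ 4 ∂μ) / (∫ z, q z * (B z) ^ 2 ∂μ) ^ 2)
    (hEf : Ef = ∫ z, q z * Real.log (q z / (px * ppost z)) ∂μ)
    (hEfKL : Ef = KL - Real.log px) (hEfne : Ef ≠ 0)
    (hδ : δ = ((∫ z, q z * (Real.log (q z / (px * ppost z)) * (B z) ^ 2) ∂μ)
        - (∫ z, q z * Real.log (q z / (px * ppost z)) ∂μ) * (∫ z, q z * (B z) ^ 2 ∂μ))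
      / ∫ z, q z * (B z) ^ 2 ∂μ)
    (hint1 : Integrable (fun z => q z * Real.log (q z / ppost z)) μ)
    (hint2 : Integrable (fun z => q z * (Real.log (q z / ppost z)) ^ 2) μ)
    (hint3 : Integrable (fun z => q z * (B z) ^ 2) μ)
    (hint4 : Integrable (fun z => q z * (B z) ^ 4) μ)
    (hint5 : Integrable (fun z => q z * (Real.log (q z / (px * ppost z)) * (B z) ^ 2)) μ)
    (hint6 : Integrable (fun z => q z * Real.log (q z / (px * ppost z))) μ) :
    |δ / Ef| ≤ 2 * Real.sqrt (C * kurt)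
      / |Real.sqrt KL - Real.log px / Real.sqrt KL| :=
  delta_cv_relative_bound_general μ q ppost B px C KL kurt δ Ef hq0 hp0 hpx hq1 hp1 hsup hKL hKLpos
    hkurt hEf hEfKL hδ hint1 hint2 hint3 hint4 hint5
end

section
/- The VarGrad estimator ĝ_VarGrad = (S−1)^{-1}(Σ_{s=1}^S f(z^(s)) ∇_φ log q_φ(z^(s)) − f̄ Σ_{s=1}^S ∇_φ log q_φ(z^(s))), with f̄ = S^{-1} Σ_s f(z^(s)) and z^(s) i.i.d. ~ q_φ, is an unbiased estimator of E_{q_φ}[f(z) ∇_φ log q_φ(z)]: its expectation equals E_{q_φ}[f ∇_φ log q_φ] using E_{q_φ}[∇_φ log q_φ] = 0 and independence of distinct samples. -/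
open MeasureTheory ProbabilityTheory Finset

/-!
The VarGrad estimator is the Bessel-corrected sample covariance of `f` and the score over the
`S` samples, hence an unbiased estimator of `Cov(f, sc) = E[f sc] - E[f] E[sc]`, which equals
`E[f sc]` because the score has mean zero. Unbiasedness of the sample covariance comes from
expanding `(∑ f(zₛ)) (∑ g(zₜ))`: the `S` diagonal terms have mean `E[f g]` and, by independence,
the `S (S - 1)` off-diagonal ones have mean `E[f] E[g]`.
-/

noncomputable def sampleCov {ι : Type*} [Fintype ι] (x y : ι → ℝ) : ℝ :=
  ((Fintype.card ι : ℝ) - 1)⁻¹ *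
    ((∑ i, x i * y i) - ((Fintype.card ι : ℝ)⁻¹ * ∑ i, x i) * ∑ i, y i)

section IID

variable {α ι : Type*} [MeasurableSpace α] [Fintype ι] {ν : Measure α} [IsProbabilityMeasure ν]
  {f g : α → ℝ}

theorem indepFun_comp_eval_pi (hf : AEStronglyMeasurable f ν) (hg : AEStronglyMeasurable g ν)
    {i j : ι} (hij : i ≠ j) :
    IndepFun (fun ω : ι → α => f (ω i)) (fun ω => g (ω j)) (Measure.pi fun _ => ν) :=
  ((iIndepFun_pi (X := fun _ x => (f x, g x))
    fun _ => hf.aemeasurable.prodMk hg.aemeasurable).indepFun hij).comp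
    measurable_fst measurable_snd

theorem integral_comp_eval_mul_comp_eval_pi [DecidableEq ι] (hf : AEStronglyMeasurable f ν)
    (hg : AEStronglyMeasurable g ν) (i j : ι) :
    ∫ ω, f (ω i) * g (ω j) ∂(Measure.pi fun _ => ν) =
      if i = j then ∫ x, f x * g x ∂ν else (∫ x, f x ∂ν) * ∫ x, g x ∂ν := by
  split_ifs with hij
  · subst hij
    exact integral_comp_eval (μ := fun _ => ν) (f := f * g) (hf.mul hg)
  · rw [← integral_comp_eval (μ := fun _ => ν) (i := i) hf,
      ← integral_comp_eval (μ := fun _ => ν) (i := j) hg]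
    exact (indepFun_comp_eval_pi hf hg hij).integral_mul_eq_mul_integral
      (hf.comp_quasiMeasurePreserving (Measure.quasiMeasurePreserving_eval _ i))
      (hg.comp_quasiMeasurePreserving (Measure.quasiMeasurePreserving_eval _ j))

theorem integrable_comp_eval_mul_comp_eval_pi (hf : Integrable f ν) (hg : Integrable g ν)
    (hfg : Integrable (f * g) ν) (i j : ι) :
    Integrable (fun ω : ι → α => f (ω i) * g (ω j)) (Measure.pi fun _ => ν) := by
  by_cases hij : i = j
  · subst hij
    exact integrable_comp_eval (μ := fun _ => ν) (f := f * g) hfg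
  · exact (indepFun_comp_eval_pi hf.1 hg.1 hij).integrable_mul
      (integrable_comp_eval (μ := fun _ => ν) hf) (integrable_comp_eval (μ := fun _ => ν) hg)

theorem integral_sum_comp_eval_pi {h : α → ℝ} (hh : Integrable h ν) :
    ∫ ω, ∑ i, h (ω i) ∂(Measure.pi fun _ : ι => ν) = Fintype.card ι * ∫ x, h x ∂ν := by
  rw [integral_finsetSum _ fun i _ => integrable_comp_eval (μ := fun _ => ν) hh]
  simp only [integral_comp_eval (μ := fun _ : ι => ν) hh.1, sum_const, card_univ, nsmul_eq_mul]

theorem integrable_sum_mul_sum_comp_eval_pi (hf : Integrable f ν) (hg : Integrable g ν)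
    (hfg : Integrable (f * g) ν) :
    Integrable (fun ω : ι → α => (∑ i, f (ω i)) * ∑ j, g (ω j)) (Measure.pi fun _ => ν) := by
  simp_rw [sum_mul_sum]
  exact integrable_finsetSum _ fun i _ => integrable_finsetSum _ fun j _ =>
    integrable_comp_eval_mul_comp_eval_pi hf hg hfg i j

theorem integral_sum_mul_sum_comp_eval_pi (hf : Integrable f ν) (hg : Integrable g ν)
    (hfg : Integrable (f * g) ν) :
    ∫ ω, (∑ i, f (ω i)) * ∑ j, g (ω j) ∂(Measure.pi fun _ : ι => ν) =
      Fintype.card ι * ∫ x, f x * g x ∂ν +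
        Fintype.card ι * ((Fintype.card ι : ℝ) - 1) * ((∫ x, f x ∂ν) * ∫ x, g x ∂ν) := by
  classical
  have hint := integrable_comp_eval_mul_comp_eval_pi (ι := ι) hf hg hfg
  simp_rw [sum_mul_sum]
  rw [integral_finsetSum _ fun i _ => integrable_finsetSum _ fun j _ => hint i j]
  simp_rw [integral_finsetSum _ fun j _ => hint _ j,
    integral_comp_eval_mul_comp_eval_pi hf.1 hg.1]
  have hrow : ∀ (a b : ℝ) (i : ι),
      ∑ j, (if i = j then a else b) = a + ((Fintype.card ι : ℝ) - 1) * b := by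
    intro a b i
    rw [← add_sum_erase _ _ (mem_univ i), if_pos rfl,
      sum_congr rfl fun j hj => if_neg (ne_of_mem_erase hj).symm, sum_const,
      card_erase_of_mem (mem_univ i), card_univ, nsmul_eq_mul,
      Nat.cast_pred (Fintype.card_pos_iff.2 ⟨i⟩)]
  simp only [hrow, sum_const, card_univ, nsmul_eq_mul]
  ring

theorem integral_sampleCov_pi (hι : 1 < Fintype.card ι) (hf : Integrable f ν)
    (hg : Integrable g ν) (hfg : Integrable (f * g) ν) :
    ∫ ω, sampleCov (f ∘ ω) (g ∘ ω) ∂(Measure.pi fun _ : ι => ν) =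
      ∫ x, f x * g x ∂ν - (∫ x, f x ∂ν) * ∫ x, g x ∂ν := by
  have hn : (1 : ℝ) < Fintype.card ι := by exact_mod_cast hι
  have hn1 : (Fintype.card ι : ℝ) - 1 ≠ 0 := by linarith
  have hdiag_int : Integrable (fun ω : ι → α => ∑ i, f (ω i) * g (ω i))
      (Measure.pi fun _ => ν) :=
    integrable_finsetSum _ fun i _ => integrable_comp_eval (μ := fun _ => ν) (f := f * g) hfg
  have hdiag := integral_sum_comp_eval_pi (ι := ι) (h := fun x => f x * g x) hfg
  have hcross := integral_sum_mul_sum_comp_eval_pi (ι := ι) hf hg hfg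
  simp only [sampleCov, Function.comp_apply, mul_assoc]
  rw [integral_const_mul, integral_sub hdiag_int
      ((integrable_sum_mul_sum_comp_eval_pi hf hg hfg).const_mul _),
    integral_const_mul, hdiag, hcross]
  field_simp
  ring

end IID

/-- Unbiasedness of VarGrad: for `S ≥ 2` i.i.d. samples `z⁽ˢ⁾ ∼ ν` (product measure on
`Fin S → α`), a fixed function `f` and score `sc` with `E_ν[sc] = 0`, the expectation of
`ĝ_VarGrad = (S−1)⁻¹ (∑ₛ f(z⁽ˢ⁾) sc(z⁽ˢ⁾) − f̄ ∑ₛ sc(z⁽ˢ⁾))` equals `E_ν[f·sc]`. -/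
theorem vargrad_unbiased {α : Type*} [MeasurableSpace α]
    (ν : Measure α) [IsProbabilityMeasure ν] (f sc : α → ℝ) (S : ℕ) (hS : 2 ≤ S)
    (hf : MemLp f 2 ν) (hsc : MemLp sc 2 ν)
    (hsc0 : ∫ z, sc z ∂ν = 0) :
    ∫ ω : Fin S → α, ((S : ℝ) - 1)⁻¹ *
        ((∑ s, f (ω s) * sc (ω s))
          - ((S : ℝ)⁻¹ * ∑ s, f (ω s)) * ∑ s, sc (ω s))
      ∂(Measure.pi fun _ : Fin S => ν)
    = ∫ z, f z * sc z ∂ν := by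
  have hS' : 1 < Fintype.card (Fin S) := by rw [Fintype.card_fin]; omega
  have hcov := integral_sampleCov_pi (ν := ν) hS' (hf.integrable one_le_two)
    (hsc.integrable one_le_two) (hf.integrable_mul hsc)
  rw [hsc0, mul_zero, sub_zero] at hcov
  simpa only [sampleCov, Fintype.card_fin, Function.comp_apply] using hcov
end
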